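/- arXiv:1005.5723 — 4 statements merged into one kernel-verified Lean document; each statement's English description precedes it below -/
import Mathlib

section
/- If g = [[a,b],[c,d]] satisfies g†Γg = Γ (with Γ = diag(E,-E)) and Z is a 2×2 complex matrix with Z†Z < E (i.e. E - Z†Z positive definite), then cZ + d is invertible. -/
/-! Evaluating the identity `gᴴ Γ g = Γ` on the column `(Z; E)` gives
`(cZ + d)ᴴ (cZ + d) = (E - ZᴴZ) + (aZ + b)ᴴ (aZ + b)`, a positive definite matrix plus a
positive semidefinite one. Hence `(cZ + d)ᴴ (cZ + d)` is invertible, and so is `cZ + d`. -/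

open Matrix
open scoped ComplexOrder

abbrev M2 : Type := Matrix (Fin 2) (Fin 2) ℂ
abbrev M4 : Type := Matrix (Fin 2 ⊕ Fin 2) (Fin 2 ⊕ Fin 2) ℂ

noncomputable def Γ : M4 := fromBlocks 1 0 0 (-1)

namespace Matrix

variable {l m n p R : Type*} [Fintype m] [Fintype p] [DecidableEq m] [DecidableEq p]
  [Ring R] [StarRing R]

theorem conjTranspose_fromRows_mul_fromBlocks_one_neg_one_mul_fromRows
    (X : Matrix m n R) (Y : Matrix p n R) :
    (fromRows X Y)ᴴ * (fromBlocks 1 0 0 (-1) : Matrix (m ⊕ p) (m ⊕ p) R) * fromRows X Y =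
      Xᴴ * X - Yᴴ * Y := by
  rw [conjTranspose_fromRows_eq_fromCols_conjTranspose, fromCols_mul_fromBlocks,
    fromCols_mul_fromRows]
  simp [sub_eq_add_neg]

theorem conjTranspose_mul_self_eq_of_fromBlocks_isometry [Fintype l] [Fintype n]
    [DecidableEq l] [DecidableEq n]
    {a : Matrix m l R} {b : Matrix m n R} {c : Matrix p l R} {d : Matrix p n R}
    (hg : (fromBlocks a b c d)ᴴ * (fromBlocks 1 0 0 (-1) : Matrix (m ⊕ p) (m ⊕ p) R) *
      fromBlocks a b c d = fromBlocks 1 0 0 (-1)) (Z : Matrix l n R) :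
    (c * Z + d)ᴴ * (c * Z + d) = (1 - Zᴴ * Z) + (a * Z + b)ᴴ * (a * Z + b) := by
  set W : Matrix (l ⊕ n) n R := fromRows Z 1
  have hW : fromBlocks a b c d * W = fromRows (a * Z + b) (c * Z + d) := by
    rw [fromBlocks_mul_fromRows, Matrix.mul_one, Matrix.mul_one]
  have h : (fromBlocks a b c d * W)ᴴ * (fromBlocks 1 0 0 (-1) : Matrix (m ⊕ p) (m ⊕ p) R) *
      (fromBlocks a b c d * W) = Wᴴ * (fromBlocks 1 0 0 (-1) : Matrix (l ⊕ n) (l ⊕ n) R) * W := by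
    rw [conjTranspose_mul, ← hg]
    simp only [Matrix.mul_assoc]
  rw [hW, conjTranspose_fromRows_mul_fromBlocks_one_neg_one_mul_fromRows,
    conjTranspose_fromRows_mul_fromBlocks_one_neg_one_mul_fromRows, conjTranspose_one,
    Matrix.mul_one] at h
  rw [← sub_eq_zero, ← neg_eq_zero, ← sub_eq_zero.mpr h]
  abel

end Matrix

/-- For g ∈ SU(2,2) and Z in the Bergman domain, cZ + d is invertible. -/
theorem stmt2 (a b c d Z : M2)
    (hg : (fromBlocks a b c d)ᴴ * Γ * (fromBlocks a b c d) = Γ)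
    (hZ : (1 - Zᴴ * Z).PosDef) :
    IsUnit (c * Z + d) := by
  have hpos : ((c * Z + d)ᴴ * (c * Z + d)).PosDef := by
    rw [conjTranspose_mul_self_eq_of_fromBlocks_isometry hg]
    exact hZ.add_posSemidef (posSemidef_conjTranspose_mul_self _)
  exact isUnit_of_mul_isUnit_right hpos.isUnit
end

section
/- The Möbius-type action Z' = (aZ+b)(cZ+d)^{-1} of a matrix g = [[a,b],[c,d]] satisfying g†Γg = Γ maps the Bergman domain D = {Z ∈ M₂(ℂ) : Z†Z < E} into itself; that is, if E - Z†Z is positive definite then E - Z'†Z' is positive definite. -/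
open Matrix
open scoped ComplexOrder

/-!
Put `W = [Z; 1]`, so that `g W = [aZ + b; cZ + d]`. Since `g` preserves the form `Γ`,
`(gW)ᴴ Γ (gW) = Wᴴ Γ W`, which reads `(cZ + d)ᴴ(cZ + d) - (aZ + b)ᴴ(aZ + b) = 1 - ZᴴZ`.
If the right side is positive definite, `cZ + d` has trivial kernel, and conjugating the identity
by `(cZ + d)⁻¹` turns the left side into `1 - Z'ᴴZ'`.
-/

open LieAlgebra.Orthogonal

namespace Matrix

lemma indefiniteDiagonal_eq_fromBlocks {p q R : Type*} [DecidableEq p] [DecidableEq q]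
    [CommRing R] : indefiniteDiagonal p q R = fromBlocks 1 0 0 (-1) := by
  rw [indefiniteDiagonal, ← fromBlocks_diagonal, diagonal_one, ← diagonal_neg (fun _ => 1),
    diagonal_one]

variable {p q R : Type*} [Fintype p] [Fintype q] [DecidableEq q]

section CommRing

variable [DecidableEq p] [CommRing R] [StarRing R]

lemma conjTranspose_fromRows_mul_indefiniteDiagonal_mul {k : Type*} (X : Matrix p k R)
    (Y : Matrix q k R) :
    (fromRows X Y)ᴴ * indefiniteDiagonal p q R * fromRows X Y = Xᴴ * X - Yᴴ * Y := by
  rw [indefiniteDiagonal_eq_fromBlocks, conjTranspose_fromRows_eq_fromCols_conjTranspose,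
    fromCols_mul_fromBlocks, fromCols_mul_fromRows]
  simp [sub_eq_add_neg]

lemma conjTranspose_mul_self_sub_eq_of_preserves_indefiniteDiagonal (a : Matrix p p R)
    (b : Matrix p q R) (c : Matrix q p R) (d : Matrix q q R) (Z : Matrix p q R)
    (hg : (fromBlocks a b c d)ᴴ * indefiniteDiagonal p q R * fromBlocks a b c d =
      indefiniteDiagonal p q R) :
    (c * Z + d)ᴴ * (c * Z + d) - (a * Z + b)ᴴ * (a * Z + b) = 1 - Zᴴ * Z := by
  have hrows : fromBlocks a b c d * fromRows Z (1 : Matrix q q R) =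
      fromRows (a * Z + b) (c * Z + d) := by
    rw [fromBlocks_mul_fromRows, Matrix.mul_one, Matrix.mul_one]
  calc (c * Z + d)ᴴ * (c * Z + d) - (a * Z + b)ᴴ * (a * Z + b)
      = -((fromRows (a * Z + b) (c * Z + d))ᴴ * indefiniteDiagonal p q R *
          fromRows (a * Z + b) (c * Z + d)) := by
        rw [conjTranspose_fromRows_mul_indefiniteDiagonal_mul, neg_sub]
    _ = -((fromRows Z (1 : Matrix q q R))ᴴ * ((fromBlocks a b c d)ᴴ * indefiniteDiagonal p q R *
          fromBlocks a b c d) * fromRows Z (1 : Matrix q q R)) := by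
        rw [← hrows, conjTranspose_mul]
        simp only [Matrix.mul_assoc]
    _ = 1 - Zᴴ * Z := by
        rw [hg, conjTranspose_fromRows_mul_indefiniteDiagonal_mul, conjTranspose_one,
          Matrix.one_mul, neg_sub]

end CommRing

section Field

variable [Field R] [PartialOrder R] [StarRing R] [StarOrderedRing R]

lemma isUnit_of_posDef_conjTranspose_mul_self_sub {M : Matrix q q R} {N : Matrix p q R}
    (h : (Mᴴ * M - Nᴴ * N).PosDef) : IsUnit M := by
  rw [isUnit_iff_isUnit_det, isUnit_iff_ne_zero, ne_eq, ← exists_mulVec_eq_zero_iff]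
  rintro ⟨v, hv0, hv⟩
  have hpos := h.dotProduct_mulVec_pos hv0
  rw [sub_mulVec, ← mulVec_mulVec, ← mulVec_mulVec, dotProduct_sub, dotProduct_mulVec,
    dotProduct_mulVec (star v), ← star_mulVec, ← star_mulVec, hv, star_zero, zero_dotProduct,
    zero_sub, neg_pos] at hpos
  exact not_lt_of_ge (dotProduct_star_self_nonneg (N *ᵥ v)) hpos

lemma posDef_one_sub_conjTranspose_mul_self_mul_inv {M : Matrix q q R} {N : Matrix p q R}
    (h : (Mᴴ * M - Nᴴ * N).PosDef) : (1 - (N * M⁻¹)ᴴ * (N * M⁻¹)).PosDef := by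
  have hM : IsUnit M := isUnit_of_posDef_conjTranspose_mul_self_sub h
  have hMM : M * M⁻¹ = 1 := mul_nonsing_inv M ((isUnit_iff_isUnit_det M).mp hM)
  have hconj : 1 - (N * M⁻¹)ᴴ * (N * M⁻¹) = (M⁻¹)ᴴ * (Mᴴ * M - Nᴴ * N) * M⁻¹ := by
    calc 1 - (N * M⁻¹)ᴴ * (N * M⁻¹)
        = (M * M⁻¹)ᴴ * (M * M⁻¹) - (M⁻¹)ᴴ * (Nᴴ * N) * M⁻¹ := by
          rw [hMM, conjTranspose_one, Matrix.one_mul, conjTranspose_mul]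
          simp only [Matrix.mul_assoc]
      _ = (M⁻¹)ᴴ * (Mᴴ * M - Nᴴ * N) * M⁻¹ := by
          simp only [conjTranspose_mul, Matrix.mul_sub, Matrix.sub_mul, Matrix.mul_assoc]
  rw [hconj]
  exact h.conjTranspose_mul_mul_same (mulVec_injective_of_isUnit (isUnit_nonsing_inv_iff.mpr hM))

end Field

end Matrix

/-- The Möbius action maps the Bergman domain into itself. -/
theorem stmt3 (a b c d Z : M2)
    (hg : (fromBlocks a b c d)ᴴ * Γ * (fromBlocks a b c d) = Γ)
    (hZ : (1 - Zᴴ * Z).PosDef) :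
    (1 - ((a * Z + b) * (c * Z + d)⁻¹)ᴴ * ((a * Z + b) * (c * Z + d)⁻¹)).PosDef := by
  rw [Γ, ← indefiniteDiagonal_eq_fromBlocks] at hg
  apply posDef_one_sub_conjTranspose_mul_self_mul_inv
  rwa [conjTranspose_mul_self_sub_eq_of_preserves_indefiniteDiagonal a b c d Z hg]
end

section
/- The action of SU(2,2) on the Bergman domain D = {Z ∈ M₂(ℂ) : Z†Z < E} is transitive: for every Z ∈ D there exists g ∈ SU(2,2) with g·0 = Z, where g·W = (aW+b)(cW+d)^{-1}. -/
open Matrix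
open scoped ComplexOrder

noncomputable def act (g : M4) (Z : M2) : M2 :=
  (g.toBlocks₁₁ * Z + g.toBlocks₁₂) * (g.toBlocks₂₁ * Z + g.toBlocks₂₂)⁻¹

/-!
The element of SU(2,2) carrying `0` to `Z` is the "boost"
`[[A, Z D], [Zᴴ A, D]]` with `A = (1 - Z Zᴴ)^(-1/2)` and `D = (1 - Zᴴ Z)^(-1/2)`.
It preserves the form `Γ` because `A (1 - Z Zᴴ) A = 1` and `D (1 - Zᴴ Z) D = 1`, and it sends
`0` to `Z D D⁻¹ = Z`. Its determinant `det A · det D · det (1 - Z Zᴴ)` is a positive real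
number, while every `g` preserving `Γ` has `|det g| = 1`; hence `det g = 1`.
-/

namespace Matrix

variable {m n : Type*} [Fintype m] [Fintype n] [DecidableEq m] [DecidableEq n]

section PosDef

variable {𝕜 : Type*} [RCLike 𝕜]

open scoped MatrixOrder in
theorem PosDef.exists_posDef_mul_mul_self_eq_one {A : Matrix n n 𝕜} (hA : A.PosDef) :
    ∃ a : Matrix n n 𝕜, a.PosDef ∧ a * A * a = 1 := by
  refine ⟨CFC.sqrt A⁻¹, (IsStrictlyPositive.sqrt A⁻¹ hA.inv.isStrictlyPositive).posDef, ?_⟩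
  have hsq : CFC.sqrt A⁻¹ * CFC.sqrt A⁻¹ = A⁻¹ := CFC.sqrt_mul_sqrt_self _ hA.inv.posSemidef.nonneg
  rw [mul_eq_one_comm, ← Matrix.mul_assoc, hsq, nonsing_inv_mul _ hA.det_pos.ne'.isUnit]

theorem PosDef.one_sub_mul_conjTranspose {Z : Matrix m n 𝕜} (hZ : (1 - Zᴴ * Z).PosDef) :
    (1 - Z * Zᴴ).PosDef := by
  set W := (1 - Zᴴ * Z)⁻¹
  have hW : (1 - Zᴴ * Z) * W = 1 := mul_nonsing_inv _ hZ.det_pos.ne'.isUnit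
  have hP : (1 + Z * W * Zᴴ).PosDef :=
    PosDef.one.add_posSemidef (hZ.inv.posSemidef.mul_mul_conjTranspose_same Z)
  have hinv : (1 - Z * Zᴴ) * (1 + Z * W * Zᴴ) = 1 := by
    calc (1 - Z * Zᴴ) * (1 + Z * W * Zᴴ) = 1 - Z * Zᴴ + Z * ((1 - Zᴴ * Z) * W) * Zᴴ := by
          simp only [Matrix.sub_mul, Matrix.mul_sub, Matrix.mul_add, Matrix.mul_assoc,
            Matrix.one_mul, Matrix.mul_one]
      _ = 1 := by rw [hW, Matrix.mul_one, sub_add_cancel]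
  rw [← inv_eq_left_inv hinv]
  exact hP.inv

end PosDef

variable {R : Type*} [CommRing R] [StarRing R]

def boost (Z : Matrix m n R) (a : Matrix m m R) (d : Matrix n n R) : Matrix (m ⊕ n) (m ⊕ n) R :=
  fromBlocks a (Z * d) (Zᴴ * a) d

section Boost

variable {Z : Matrix m n R} {a : Matrix m m R} {d : Matrix n n R}

theorem conjTranspose_boost_mul_mul (ha : a.IsHermitian) (hd : d.IsHermitian)
    (haZ : a * (1 - Z * Zᴴ) * a = 1) (hdZ : d * (1 - Zᴴ * Z) * d = 1) :
    (boost Z a d)ᴴ * fromBlocks 1 0 0 (-1) * boost Z a d = fromBlocks 1 0 0 (-1) := by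
  simp only [boost, fromBlocks_conjTranspose, conjTranspose_mul, conjTranspose_conjTranspose,
    ha.eq, hd.eq, fromBlocks_multiply, fromBlocks_inj]
  simp only [Matrix.mul_sub, Matrix.sub_mul, Matrix.mul_one, Matrix.mul_assoc] at haZ hdZ
  simp only [Matrix.mul_zero, Matrix.mul_one, Matrix.mul_neg, add_zero, zero_add, Matrix.neg_mul,
    Matrix.mul_assoc]
  refine ⟨?_, by abel, by abel, ?_⟩
  · rw [← haZ]; abel
  · rw [← hdZ]; abel

theorem boost_eq_fromBlocks_mul : boost Z a d = fromBlocks 1 Z Zᴴ 1 * fromBlocks a 0 0 d := by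
  simp [boost, fromBlocks_multiply]

theorem det_boost : (boost Z a d).det = a.det * d.det * (1 - Z * Zᴴ).det := by
  rw [boost_eq_fromBlocks_mul, det_mul, det_fromBlocks_one₂₂, det_fromBlocks_zero₂₁, mul_comm]

end Boost

theorem star_det_mul_det_eq_one_of_conjTranspose_mul_mul_eq_self {J g : Matrix n n R}
    (hJ : IsUnit J.det) (h : gᴴ * J * g = J) : star g.det * g.det = 1 := by
  have hdet := congrArg det h
  rw [det_mul, det_mul, det_conjTranspose, mul_right_comm, mul_comm] at hdet
  exact hJ.mul_left_cancel (hdet.trans (mul_one _).symm)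

end Matrix

theorem Complex.eq_one_of_pos_of_star_mul_self_eq_one {x : ℂ} (hx : 0 < x)
    (h : star x * x = 1) : x = 1 := by
  rw [(IsSelfAdjoint.of_nonneg hx.le).star_eq, mul_self_eq_one_iff] at h
  refine h.resolve_right ?_
  rintro rfl
  exact lt_irrefl 0 (zero_lt_one.trans (neg_pos.mp hx))

theorem act_boost_zero (Z a d : M2) (hd : IsUnit d.det) : act (boost Z a d) 0 = Z := by
  simp [act, boost, Matrix.mul_assoc, mul_nonsing_inv _ hd]

/-- SU(2,2) acts transitively on the Bergman domain: every Z ∈ D is g·0 for some g. -/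
theorem stmt5 (Z : M2) (hZ : (1 - Zᴴ * Z).PosDef) :
    ∃ g : M4, gᴴ * Γ * g = Γ ∧ g.det = 1 ∧ act g 0 = Z := by
  have hZ' : (1 - Z * Zᴴ).PosDef := hZ.one_sub_mul_conjTranspose
  obtain ⟨a, ha, haZ⟩ := hZ'.exists_posDef_mul_mul_self_eq_one
  obtain ⟨d, hd, hdZ⟩ := hZ.exists_posDef_mul_mul_self_eq_one
  have hΓ : (boost Z a d)ᴴ * Γ * boost Z a d = Γ :=
    conjTranspose_boost_mul_mul ha.isHermitian hd.isHermitian haZ hdZ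
  have hΓdet : IsUnit Γ.det := by simp [Γ, det_fromBlocks_zero₂₁, det_neg]
  refine ⟨boost Z a d, hΓ, ?_, act_boost_zero Z a d hd.det_pos.ne'.isUnit⟩
  refine Complex.eq_one_of_pos_of_star_mul_self_eq_one ?_
    (star_det_mul_det_eq_one_of_conjTranspose_mul_mul_eq_self hΓdet hΓ)
  rw [det_boost]
  exact mul_pos (mul_pos ha.det_pos hd.det_pos) hZ'.det_pos
end

section
/- Let b†_{αβ} (α,β = 1,2) be four commuting creation operators and b_{αβ} the corresponding annihilation operators with [b_{αβ}, b†_{γδ}] = δ_{αγ}δ_{βδ}. For a real diagonal 2×2 matrix Λ, one has the identity exp(-tr(b†Λb)) · det(b†)^N = exp(-N tr Λ) · det(b†)^N · exp(-tr(b†Λb)) as operators, where det(b†) = b†₁₁b†₂₂ - b†₁₂b†₂₁. -/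
/-!
Write `H = tr(b†Λb)` and `D = det(b†)`. Expanding the exponentials, the operator identity
`exp(-H) D^N = exp(-N trΛ) D^N exp(-H)` is equivalent to `[H, D^N] = N trΛ D^N`.
Since `ad H` is a derivation, eigenvectors of `ad H` multiply with eigenvalues adding.
By the canonical commutation relations `b†_{γδ}` is an eigenvector with eigenvalue `Λ_δ`, so both
monomials of `D` are eigenvectors with eigenvalue `Λ_0 + Λ_1 = trΛ`, hence so are `D` and `D^N`.
-/

section

-- Kept local: outside this section it would give a second path to the `ℂ`-module structure of `A`.
attribute [local instance] LieRing.ofAssociativeRing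

namespace Ring

variable {A : Type*} [Ring A]

theorem lie_mul (x y z : A) : ⁅x, y * z⁆ = ⁅x, y⁆ * z + y * ⁅x, z⁆ := by
  simp only [lie_def]; noncomm_ring

theorem mul_lie (x y z : A) : ⁅x * y, z⁆ = x * ⁅y, z⁆ + ⁅x, z⁆ * y := by
  simp only [lie_def]; noncomm_ring

variable {R : Type*} [CommRing R] [Algebra R A] {x y z : A} {s t : R}

theorem lie_mul_eq_smul (hy : ⁅x, y⁆ = s • y) (hz : ⁅x, z⁆ = t • z) :
    ⁅x, y * z⁆ = (s + t) • (y * z) := by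
  rw [lie_mul, hy, hz, smul_mul_assoc, mul_smul_comm, add_smul]

theorem lie_pow_eq_smul (hy : ⁅x, y⁆ = s • y) (n : ℕ) :
    ⁅x, y ^ n⁆ = ((n : R) * s) • y ^ n := by
  induction n with
  | zero => simp [lie_def]
  | succ n ih => rw [pow_succ, lie_mul_eq_smul ih hy]; push_cast; ring_nf

end Ring

open Ring

variable {R A : Type*} [CommRing R] [Ring A] [Algebra R A]

/-- The operator `tr(b†Λb)` for a diagonal matrix `Λ = diag(Λ β)`. -/
def weightedNumberOp {ι κ : Type*} [Fintype ι] [Fintype κ] (Λ : κ → R) (b bd : ι → κ → A) : A :=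
  ∑ α, ∑ β, Λ β • (bd α β * b α β)

theorem lie_weightedNumberOp_creation {ι κ : Type*} [Fintype ι] [Fintype κ] [DecidableEq ι]
    [DecidableEq κ] (b bd : ι → κ → A)
    (hccr : ∀ α β γ δ, b α β * bd γ δ - bd γ δ * b α β =
      algebraMap R A ((if α = γ then 1 else 0) * (if β = δ then 1 else 0)))
    (hbdbd : ∀ α β γ δ, bd α β * bd γ δ = bd γ δ * bd α β) (Λ : κ → R) (γ : ι) (δ : κ) :
    ⁅weightedNumberOp Λ b bd, bd γ δ⁆ = Λ δ • bd γ δ := by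
  have hcreation_comm : ∀ α β, ⁅bd α β, bd γ δ⁆ = 0 := fun α β => sub_eq_zero.2 (hbdbd α β γ δ)
  have hcanonical : ∀ α β, ⁅b α β, bd γ δ⁆ =
      algebraMap R A ((if α = γ then 1 else 0) * (if β = δ then 1 else 0)) :=
    fun α β => hccr α β γ δ
  rw [weightedNumberOp, sum_lie]
  simp only [sum_lie, smul_lie, mul_lie, hcreation_comm, hcanonical, zero_mul, add_zero,
    ← Algebra.commutes, ← Algebra.smul_def]
  simp [ite_smul]

theorem lie_det_eq_smul (x : A) (bd : Fin 2 → Fin 2 → A) (Λ : Fin 2 → R)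
    (h : ∀ γ δ, ⁅x, bd γ δ⁆ = Λ δ • bd γ δ) :
    ⁅x, bd 0 0 * bd 1 1 - bd 0 1 * bd 1 0⁆ =
      (Λ 0 + Λ 1) • (bd 0 0 * bd 1 1 - bd 0 1 * bd 1 0) := by
  rw [lie_sub, smul_sub, lie_mul_eq_smul (h 0 0) (h 1 1), lie_mul_eq_smul (h 0 1) (h 1 0),
    add_comm (Λ 1)]

end

theorem stmt15_general {A : Type*} [Ring A] [Algebra ℂ A]
    (b bd : Fin 2 → Fin 2 → A)
    (hccr : ∀ α β γ δ : Fin 2,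
      b α β * bd γ δ - bd γ δ * b α β =
        algebraMap ℂ A ((if α = γ then 1 else 0) * (if β = δ then 1 else 0)))
    (hbdbd : ∀ α β γ δ : Fin 2, bd α β * bd γ δ = bd γ δ * bd α β)
    (Λ : Fin 2 → ℝ) (N : ℕ) :
    let trΛ : A := ∑ α : Fin 2, ∑ β : Fin 2, ((Λ β : ℂ)) • (bd α β * b α β)
    let detbd : A := bd 0 0 * bd 1 1 - bd 0 1 * bd 1 0
    trΛ * detbd ^ N - detbd ^ N * trΛ =
      ((N : ℂ) * ((Λ 0 : ℂ) + (Λ 1 : ℂ))) • detbd ^ N := by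
  intro trΛ detbd
  have heigen := lie_weightedNumberOp_creation b bd hccr hbdbd (fun β => (Λ β : ℂ))
  exact Ring.lie_pow_eq_smul (lie_det_eq_smul _ bd _ heigen) N

/-- The commutator identity [tr(b†Λb), det(b†)^N] = N tr(Λ) det(b†)^N in the Weyl
algebra generated by four oscillator pairs (the algebraic form of the identity
exp(-tr(b†Λb)) det(b†)^N = exp(-N trΛ) det(b†)^N exp(-tr(b†Λb))). -/
theorem stmt15 {A : Type*} [Ring A] [Algebra ℂ A]
    (b bd : Fin 2 → Fin 2 → A)
    (hccr : ∀ α β γ δ : Fin 2,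
      b α β * bd γ δ - bd γ δ * b α β =
        algebraMap ℂ A ((if α = γ then 1 else 0) * (if β = δ then 1 else 0)))
    (hbb : ∀ α β γ δ : Fin 2, b α β * b γ δ = b γ δ * b α β)
    (hbdbd : ∀ α β γ δ : Fin 2, bd α β * bd γ δ = bd γ δ * bd α β)
    (Λ : Fin 2 → ℝ) (N : ℕ) :
    let trΛ : A := ∑ α : Fin 2, ∑ β : Fin 2, ((Λ β : ℂ)) • (bd α β * b α β)
    let detbd : A := bd 0 0 * bd 1 1 - bd 0 1 * bd 1 0
    trΛ * detbd ^ N - detbd ^ N * trΛ =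
      ((N : ℂ) * ((Λ 0 : ℂ) + (Λ 1 : ℂ))) • detbd ^ N :=
  stmt15_general b bd hccr hbdbd Λ N
end
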